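/- arXiv:2301.05078 — 4 statements merged into one kernel-verified Lean document; each statement's English description precedes it below -/
import Mathlib

section
/- Let X be a spectral topological space and Y ⊆ X a constructible subset. Then the closure of Y equals the union of the closures of the points of Y, i.e. cl(Y) = ⋃_{y ∈ Y} cl({y}). -/
universe u

/-- A constructible subset of a topological space: a finite Boolean combination of
quasi-compact open subsets. -/
inductive IsConstructibleIn {X : Type u} [TopologicalSpace X] : Set X → Prop
  | basic {U : Set X} (hU : IsOpen U) (hU' : IsCompact U) : IsConstructibleIn U
  | compl {s : Set X} (hs : IsConstructibleIn s) : IsConstructibleIn sᶜ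
  | union {s t : Set X} (hs : IsConstructibleIn s) (ht : IsConstructibleIn t) :
      IsConstructibleIn (s ∪ t)

/-!
If `x ∈ closure Y`, then `Y ∩ U` is nonempty for every quasi-compact open `U ∋ x`. These sets
are closed in the constructible topology, which is quasi-compact on a spectral space, and they
have the finite intersection property, so some `y ∈ Y` lies in every quasi-compact open
neighbourhood of `x`. As the quasi-compact opens form a basis, `x` is a specialization of `y`.
-/

open Set Topology

variable {X : Type*} [TopologicalSpace X]

lemma IsConstructibleIn.isClopen_withConstructibleTopology {Y : Set X}
    (hY : IsConstructibleIn Y) :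
    IsClopen (WithTopology.ofTopology ⁻¹' Y : Set (WithConstructibleTopology X)) := by
  induction hY with
  | @basic U hU hU' =>
    refine ⟨?_, WithConstructibleTopology.isOpen_iff.mpr
      (hU'.isOpen_constructibleTopology_of_isOpen hU)⟩
    rw [← isOpen_compl_iff, WithConstructibleTopology.isOpen_iff]
    exact IsCompact.isOpen_constructibleTopology_of_isClosed (s := Uᶜ) (by rwa [compl_compl])
      hU.isClosed_compl
  | compl _ ih => exact ih.compl
  | union _ _ ihs iht => exact ihs.union iht

lemma specializes_of_forall_isOpen_isCompact [PrespectralSpace X] {x y : X}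
    (h : ∀ U : Set X, IsOpen U → IsCompact U → x ∈ U → y ∈ U) : y ⤳ x := by
  rw [specializes_iff_forall_open]
  intro V hV hxV
  obtain ⟨U, ⟨hU, hU'⟩, hxU, hUV⟩ :=
    PrespectralSpace.isTopologicalBasis.exists_subset_of_mem_open hxV hV
  exact hUV (h U hU hU' hxU)

theorem IsConstructibleIn.closure_eq_biUnion_closure_singleton [CompactSpace X] [QuasiSober X]
    [PrespectralSpace X] [QuasiSeparatedSpace X] {Y : Set X} (hY : IsConstructibleIn Y) :
    closure Y = ⋃ y ∈ Y, closure {y} := by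
  refine Subset.antisymm ?_
    (iUnion₂_subset fun y hy => closure_mono (singleton_subset_iff.mpr hy))
  intro x hx
  let ι := {U : Set X // IsOpen U ∧ IsCompact U ∧ x ∈ U}
  let t : ι → Set (WithConstructibleTopology X) :=
    fun U => WithTopology.ofTopology ⁻¹' (Y ∩ U.1)
  have ht_closed (U : ι) : IsClosed (t U) :=
    (hY.isClopen_withConstructibleTopology.inter
      (IsConstructibleIn.basic U.2.1 U.2.2.1).isClopen_withConstructibleTopology).isClosed
  have ht_finite_inter (s : Finset ι) : (⋂ U ∈ s, t U).Nonempty := by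
    obtain ⟨z, hzU, hzY⟩ := mem_closure_iff.mp hx (⋂ U ∈ s, U.1)
      (isOpen_biInter_finset fun U _ => U.2.1) (mem_iInter₂.mpr fun U _ => U.2.2.2)
    exact ⟨WithTopology.toTopology _ z,
      mem_iInter₂.mpr fun U hU => ⟨hzY, mem_iInter₂.mp hzU U hU⟩⟩
  obtain ⟨y, hy⟩ := CompactSpace.iInter_nonempty ht_closed ht_finite_inter
  have hyYU (U : ι) : y.ofTopology ∈ Y ∩ U.1 := mem_iInter.mp hy U
  refine mem_iUnion₂.mpr
    ⟨y.ofTopology, (hyYU ⟨univ, isOpen_univ, isCompact_univ, trivial⟩).1, ?_⟩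
  exact specializes_iff_mem_closure.mp <|
    specializes_of_forall_isOpen_isCompact fun U hU hU' hxU => (hyYU ⟨U, hU, hU', hxU⟩).2

/-- In a spectral space (a space homeomorphic to the prime spectrum of a commutative
ring), the closure of a constructible subset is the union of the closures of its
points. -/
theorem stmt4 {X : Type u} [TopologicalSpace X]
    (hX : ∃ (R : Type u) (_ : CommRing R), Nonempty (X ≃ₜ PrimeSpectrum R))
    (Y : Set X) (hY : IsConstructibleIn Y) :
    closure Y = ⋃ y ∈ Y, closure {y} := by
  obtain ⟨R, _, ⟨e⟩⟩ := hX
  have : CompactSpace X := e.symm.compactSpace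
  have : SpectralSpace X := e.isOpenEmbedding.spectralSpace
  exact hY.closure_eq_biUnion_closure_singleton
end

section
/- Let k be a field and let Λ'' ⊆ Λ' ⊆ Λ be k[[u]]-lattices in k((u))² (finitely generated submodules spanning k((u))² over k((u))) with dim_k(Λ/Λ') = dim_k(Λ'/Λ'') = 1 and u·Λ ⊆ Λ''. Then Λ = u⁻¹Λ'' := {x ∈ k((u))² : u·x ∈ Λ''}. Consequently, if Λ'' has Hodge invariant (a, b) with respect to a lattice Λ₀ containing Λ (with a, b ≥ 1), then Λ has Hodge invariant (a − 1, b − 1). -/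
/-!
If `u • x ∈ Λ''` but `x ∉ Λ`, then `N = Λ + k⟦u⟧ x` is again a lattice and `u N ⊆ Λ''`, so
`Λ'' ⊊ Λ' ⊊ Λ ⊊ N` is a chain of length three between `u N` and `N`. Over a local ring the length
of `N / 𝔪 N` is the minimal number of generators of `N`, and a lattice in a 2-dimensional space
over a PID is free of rank 2: contradiction. Hence `Λ = u⁻¹ Λ''`, and dividing the generators
`u^a e₁, u^b e₂` of `Λ''` by `u` gives generators of `Λ`.
-/

open IsLocalRing Submodule

theorem Submodule.comap_subtype_lt_comap_subtype {R M : Type*} [Semiring R] [AddCommMonoid M]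
    [Module R M] {N P Q : Submodule R M} (hQ : Q ≤ N) (h : P < Q) :
    comap N.subtype P < comap N.subtype Q := by
  refine lt_of_le_of_ne (comap_mono h.le) fun heq => h.ne ?_
  have := congrArg (map N.subtype) heq
  rwa [map_comap_subtype, map_comap_subtype, inf_eq_right.2 (h.le.trans hQ),
    inf_eq_right.2 hQ] at this

section LocalRing

variable {R M : Type*} [CommRing R] [IsLocalRing R] [AddCommGroup M] [Module R M]

theorem IsLocalRing.length_quotient_maximalIdeal_smul_top {N : Submodule R M} (hN : N.FG) :
    Module.length R (N ⧸ maximalIdeal R • (⊤ : Submodule R N)) = N.spanFinrank := by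
  have : Module.Finite R N := .of_fg hN
  have : (maximalIdeal R).IsMaximal := maximalIdeal.isMaximal R
  let := Ideal.Quotient.field (maximalIdeal R)
  rw [spanFinrank_eq_finrank_quotient N hN,
    Module.length_eq_of_surjective (Ideal.Quotient.mk_surjective (I := maximalIdeal R))]
  have : Module.Finite (R ⧸ maximalIdeal R) (N ⧸ maximalIdeal R • (⊤ : Submodule R N)) :=
    .of_restrictScalars_finite R _ _
  exact Module.length_eq_finrank (R ⧸ maximalIdeal R) (N ⧸ maximalIdeal R • (⊤ : Submodule R N))

theorem IsLocalRing.three_le_spanFinrank_of_lt_of_lt_of_lt {N P₀ P₁ P₂ : Submodule R M}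
    (hN : N.FG) (hm : maximalIdeal R • N ≤ P₀) (h₀₁ : P₀ < P₁) (h₁₂ : P₁ < P₂) (h₂ : P₂ < N) :
    3 ≤ N.spanFinrank := by
  have hm' : maximalIdeal R • ⊤ ≤ comap N.subtype P₀ := by
    rwa [← map_le_iff_le_comap, map_smul'', map_subtype_top]
  have h₂' := comap_subtype_lt_comap_subtype le_rfl h₂
  rw [comap_subtype_self] at h₂'
  have h₁₂' := comap_subtype_lt_comap_subtype h₂.le h₁₂
  have h₀₁' := comap_subtype_lt_comap_subtype (h₁₂.le.trans h₂.le) h₀₁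
  have : (3 : ℕ∞) ≤ Module.length R (N ⧸ maximalIdeal R • (⊤ : Submodule R N)) := by
    rw [Module.length_quotient]
    calc (3 : ℕ∞) = Order.coheight (⊤ : Submodule R N) + 1 + 1 + 1 := by
          rw [Order.coheight_top]; norm_num
      _ ≤ Order.coheight (comap N.subtype P₂) + 1 + 1 := by
          gcongr; exact Order.coheight_add_one_le h₂'
      _ ≤ Order.coheight (comap N.subtype P₁) + 1 := by
          gcongr; exact Order.coheight_add_one_le h₁₂'
      _ ≤ Order.coheight (comap N.subtype P₀) := Order.coheight_add_one_le h₀₁'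
      _ ≤ _ := Order.coheight_anti hm'
  rw [length_quotient_maximalIdeal_smul_top hN] at this
  exact_mod_cast this

end LocalRing

section Lattice

variable {R K V : Type*} [CommRing R] [IsDomain R] [IsPrincipalIdealRing R] [Field K]
  [Algebra R K] [IsFractionRing R K] [AddCommGroup V] [Module R V] [Module K V]
  [IsScalarTower R K V]

theorem Submodule.IsLattice.spanFinrank_eq (N : Submodule R V) [IsLattice K N] :
    N.spanFinrank = Module.finrank K V := by
  rw [← spanFinrank_top, ← Module.finrank_eq_spanFinrank_of_free]
  exact congrArg Cardinal.toNat (IsLattice.rank' K N)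

theorem Submodule.mem_of_smul_mem_of_lt_of_lt [IsLocalRing R] {ϖ : R}
    (hϖ : maximalIdeal R = Ideal.span {ϖ}) (hV : Module.finrank K V ≤ 2)
    {Λ'' Λ' Λ : Submodule R V} [IsLattice K Λ] (h₁ : Λ'' < Λ') (h₂ : Λ' < Λ)
    (hΛ : ∀ x ∈ Λ, ϖ • x ∈ Λ'') {x : V} (hx : ϖ • x ∈ Λ'') : x ∈ Λ := by
  by_contra hxΛ
  set N := Λ ⊔ span R {x}
  have hΛN : Λ < N := left_lt_sup.mpr (by rwa [span_singleton_le_iff_mem])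
  have : IsLattice K N :=
    .of_le_of_isLattice_of_fg K le_sup_left (IsLattice.fg.sup (fg_span_singleton x))
  have hN : N ≤ Λ''.comap (LinearMap.lsmul R V ϖ) :=
    sup_le (fun y hy => hΛ y hy) ((span_singleton_le_iff_mem _ _).mpr hx)
  have hmN : maximalIdeal R • N ≤ Λ'' := by
    rw [hϖ, smul_le]
    rintro r hr y hy
    obtain ⟨c, rfl⟩ := Ideal.mem_span_singleton'.mp hr
    rw [mul_smul]
    exact Λ''.smul_mem c (hN hy)
  have := three_le_spanFinrank_of_lt_of_lt_of_lt IsLattice.fg hmN h₁ h₂ hΛN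
  rw [IsLattice.spanFinrank_eq N] at this
  omega

end Lattice

theorem Submodule.eq_span_pair_of_mem_iff_smul_mem {R V : Type*} [CommRing R] [IsDomain R]
    [AddCommGroup V] [Module R V] [Module.IsTorsionFree R V] {ϖ : R} (hϖ : ϖ ≠ 0)
    {Λ Λ'' : Submodule R V} (hΛ : ∀ x, x ∈ Λ ↔ ϖ • x ∈ Λ'') {v w : V}
    (hΛ'' : Λ'' = span R {ϖ • v, ϖ • w}) : Λ = span R {v, w} :=
  calc Λ = comap (LinearMap.lsmul R V ϖ) Λ'' := ext hΛ
    _ = comap _ (map (LinearMap.lsmul R V ϖ) (span R {v, w})) := by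
      rw [hΛ'', map_span, Set.image_pair]; rfl
    _ = span R {v, w} := comap_map_eq_of_injective (smul_right_injective V hϖ) _

/-- Let `Λ'' ⊆ Λ' ⊆ Λ` be `k[[u]]`-lattices in `k((u))²` with both quotients of
`k`-dimension 1 (equivalently: each inclusion is a covering in the lattice of
`k[[u]]`-submodules) and `u·Λ ⊆ Λ''`.  Then `Λ = u⁻¹ Λ''`; consequently if `Λ''` has
Hodge invariant `(a, b)` (with `a ≥ b ≥ 1`) with respect to a lattice `Λ₀ ⊇ Λ`, then
`Λ` has Hodge invariant `(a - 1, b - 1)`. -/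
theorem stmt8 {k : Type*} [Field k]
    (Λ'' Λ' Λ : Submodule (PowerSeries k) (Fin 2 → LaurentSeries k))
    (hlat : ∀ W ∈ [Λ'', Λ', Λ], W.FG ∧
      Submodule.span (LaurentSeries k) (W : Set (Fin 2 → LaurentSeries k)) = ⊤)
    (h1 : Λ'' ⋖ Λ') (h2 : Λ' ⋖ Λ)
    (hu : ∀ x ∈ Λ, (PowerSeries.X : PowerSeries k) • x ∈ Λ'') :
    (Λ : Set (Fin 2 → LaurentSeries k)) =
      {x | (PowerSeries.X : PowerSeries k) • x ∈ Λ''} ∧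
    ∀ (Λ₀ : Submodule (PowerSeries k) (Fin 2 → LaurentSeries k)),
      Λ₀.FG → Submodule.span (LaurentSeries k) (Λ₀ : Set (Fin 2 → LaurentSeries k)) = ⊤ →
      Λ ≤ Λ₀ →
      ∀ a b : ℕ, 1 ≤ b → b ≤ a →
        (∃ B : Module.Basis (Fin 2) (PowerSeries k) Λ₀,
          Λ'' = Submodule.span (PowerSeries k)
            {(PowerSeries.X ^ a : PowerSeries k) • (B 0 : Fin 2 → LaurentSeries k),
             (PowerSeries.X ^ b : PowerSeries k) • (B 1 : Fin 2 → LaurentSeries k)}) →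
        ∃ B : Module.Basis (Fin 2) (PowerSeries k) Λ₀,
          Λ = Submodule.span (PowerSeries k)
            {(PowerSeries.X ^ (a - 1) : PowerSeries k) • (B 0 : Fin 2 → LaurentSeries k),
             (PowerSeries.X ^ (b - 1) : PowerSeries k) • (B 1 : Fin 2 → LaurentSeries k)} := by
  obtain ⟨hfg, hspan⟩ := hlat Λ (by simp)
  have : IsLattice (LaurentSeries k) Λ := ⟨hfg, hspan⟩
  have : Module.IsTorsionFree (PowerSeries k) (Fin 2 → LaurentSeries k) :=
    .trans_faithfulSMul _ (LaurentSeries k) _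
  have hmem (x : Fin 2 → LaurentSeries k) : x ∈ Λ ↔ PowerSeries.X • x ∈ Λ'' :=
    ⟨hu x, mem_of_smul_mem_of_lt_of_lt PowerSeries.maximalIdeal_eq_span_X (by simp) h1.lt h2.lt hu⟩
  refine ⟨Set.ext hmem, ?_⟩
  rintro Λ₀ - - - a b hb hba ⟨B, hB⟩
  refine ⟨B, eq_span_pair_of_mem_iff_smul_mem PowerSeries.X_ne_zero hmem ?_⟩
  rw [hB, smul_smul, smul_smul, ← pow_succ', ← pow_succ', Nat.sub_add_cancel (hb.trans hba),
    Nat.sub_add_cancel hb]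
end

section
/- Let k be a field, e ≥ 1, and let ℰ be a free module of rank 2 over k[u]/(u^e). Suppose 0 = ω^{(0)} ⊆ ω^{(1)} ⊆ ⋯ ⊆ ω^{(e)} is a chain of k[u]/(u^e)-submodules of ℰ with dim_k(ω^{(j)}/ω^{(j−1)}) = 1 and u·ω^{(j)} ⊆ ω^{(j−1)} for all 1 ≤ j ≤ e. Then the following are equivalent: (1) for every 2 ≤ j ≤ e the map induced by multiplication by u from ω^{(j)}/ω^{(j−1)} to ω^{(j−1)}/ω^{(j−2)} is nonzero; (2) ω^{(e)} is a free k[u]/(u^e)-module of rank 1. -/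
/-!
If `v ∈ ω^e` is not in `ω^{e-1}` and every graded map induced by `u` is nonzero, then `u • w`
lies in `ω^{j-1} \ ω^{j-2}` whenever `w ∈ ω^j \ ω^{j-1}`, because `ω^j = ω^{j-1} + R w`. Descending
from `v`, each `ω^j` is spanned by `u^{e-j} • v`, and `u^{e-1} • v ≠ 0`; over `k[u]/(u^e)` every
nonzero scalar divides `u^{e-1}`, so `v` is torsion free. Conversely, if `u^{e-1} • v ≠ 0` then
`u • (u^{e-j} • v) ∉ ω^{j-2}`, since `u^{j-2}` kills `ω^{j-2}`.
-/

/-- The truncated polynomial ring `k[u]/(u^e)`. -/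
noncomputable abbrev TruncPoly (k : Type*) [Field k] (e : ℕ) : Type _ :=
  Polynomial k ⧸ Ideal.span {(Polynomial.X : Polynomial k) ^ e}

/-- The class of `u` in `k[u]/(u^e)`. -/
noncomputable abbrev truncU (k : Type*) [Field k] (e : ℕ) : TruncPoly k e :=
  Ideal.Quotient.mk _ Polynomial.X

section TruncPoly

open Polynomial

variable {k : Type*} [Field k] {e : ℕ}

lemma truncU_pow_ne_zero {i : ℕ} (hi : i < e) : truncU k e ^ i ≠ 0 := by
  rw [← map_pow, Ne, Ideal.Quotient.eq_zero_iff_mem, Ideal.mem_span_singleton]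
  intro h
  have := natDegree_le_of_dvd h (pow_ne_zero i X_ne_zero)
  simp only [natDegree_X_pow] at this
  omega

lemma dvd_truncU_pow_pred {a : TruncPoly k e} (ha : a ≠ 0) : a ∣ truncU k e ^ (e - 1) := by
  obtain ⟨p, rfl⟩ := Ideal.Quotient.mk_surjective a
  have hp : p ≠ 0 := by rintro rfl; exact ha (map_zero _)
  obtain ⟨n, q, hXq, rfl⟩ := WfDvdMonoid.max_power_factor hp irreducible_X
  have hn : n < e := by
    by_contra! h
    exact ha (Ideal.Quotient.eq_zero_iff_mem.2
      (Ideal.mem_span_singleton.2 ((pow_dvd_pow X h).mul_right q)))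
  -- `q` is prime to `X`, hence a unit modulo `X ^ e`
  obtain ⟨s, t, hst⟩ := (irreducible_X.coprime_iff_not_dvd.2 hXq).pow_left (m := e)
  have hX : Ideal.Quotient.mk (Ideal.span {(X : k[X]) ^ e}) (X ^ e) = 0 :=
    Ideal.Quotient.eq_zero_iff_mem.2 (Ideal.mem_span_singleton_self _)
  refine ⟨Ideal.Quotient.mk _ (X ^ (e - 1 - n) * t), ?_⟩
  have hunit := congrArg (Ideal.Quotient.mk (Ideal.span {(X : k[X]) ^ e})) hst
  simp only [map_add, map_mul, map_one, hX, mul_zero, zero_add] at hunit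
  calc truncU k e ^ (e - 1)
      = truncU k e ^ n * truncU k e ^ (e - 1 - n) * 1 := by
        rw [mul_one, ← pow_add, Nat.add_sub_cancel' (by omega)]
    _ = _ := by rw [← hunit, map_mul, map_pow, map_mul, map_pow]; ring

lemma forall_smul_eq_zero_imp_iff_truncU_pow_pred_smul_ne_zero {M : Type*} [AddCommGroup M]
    [Module (TruncPoly k e) M] (he : 1 ≤ e) {v : M} :
    (∀ a : TruncPoly k e, a • v = 0 → a = 0) ↔ truncU k e ^ (e - 1) • v ≠ 0 := by
  refine ⟨fun h hv => truncU_pow_ne_zero (by omega) (h _ hv), fun hv a hav => ?_⟩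
  by_contra ha
  obtain ⟨c, hc⟩ := dvd_truncU_pow_pred ha
  exact hv (by rw [hc, mul_comm, mul_smul, hav, smul_zero])

end TruncPoly

section Filtration

variable {R M : Type*} [CommRing R] [AddCommGroup M] [Module R M]

lemma Submodule.sup_span_singleton_eq_of_covBy {A B : Submodule R M} (h : A ⋖ B) {w : M}
    (hwB : w ∈ B) (hwA : w ∉ A) : A ⊔ span R {w} = B :=
  (h.eq_or_eq le_sup_left (sup_le h.le (span_singleton_le_iff_mem w B |>.2 hwB))).resolve_left
    fun hA => hwA (hA ▸ mem_sup_right (mem_span_singleton_self w))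

/-- The one-dimensional graded pieces of a Pappas–Rapoport filtration are encoded as covering
relations `ω (j - 1) ⋖ ω j`. -/
structure IsPappasRapoportFiltration (u : R) (ω : ℕ → Submodule R M) (e : ℕ) : Prop where
  zero_eq_bot : ω 0 = ⊥
  covBy : ∀ j, 1 ≤ j → j ≤ e → ω (j - 1) ⋖ ω j
  smul_mem : ∀ j, 1 ≤ j → j ≤ e → ∀ x ∈ ω j, u • x ∈ ω (j - 1)

namespace IsPappasRapoportFiltration

variable {u : R} {ω : ℕ → Submodule R M} {e : ℕ} (hω : IsPappasRapoportFiltration u ω e)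
include hω

lemma smul_mem_pred {j : ℕ} (hj : j ≤ e) {x : M} (hx : x ∈ ω j) : u • x ∈ ω (j - 1) := by
  rcases Nat.eq_zero_or_pos j with rfl | hj0
  · rw [hω.zero_eq_bot, Submodule.mem_bot] at hx
    rw [hx, smul_zero]
    exact zero_mem _
  · exact hω.smul_mem j hj0 hj x hx

lemma pow_smul_mem (i : ℕ) {j : ℕ} (hj : j ≤ e) {x : M} (hx : x ∈ ω j) :
    u ^ i • x ∈ ω (j - i) := by
  induction i with
  | zero => simpa using hx
  | succ i ih =>
    rw [pow_succ', mul_smul, ← Nat.sub_sub]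
    exact hω.smul_mem_pred (by omega) ih

lemma pow_smul_eq_zero {j : ℕ} (hj : j ≤ e) {x : M} (hx : x ∈ ω j) : u ^ j • x = 0 := by
  simpa [hω.zero_eq_bot] using hω.pow_smul_mem j hj hx

lemma smul_notMem_of_notMem {j : ℕ} (hj : 2 ≤ j) (hje : j ≤ e)
    (hgr : ∃ x ∈ ω j, u • x ∉ ω (j - 2)) {w : M} (hw : w ∈ ω j) (hw' : w ∉ ω (j - 1)) :
    u • w ∉ ω (j - 2) := by
  intro huw
  obtain ⟨x, hx, hux⟩ := hgr
  rw [← Submodule.sup_span_singleton_eq_of_covBy (hω.covBy j (by omega) hje) hw hw'] at hx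
  obtain ⟨y, hy, z, hz, rfl⟩ := Submodule.mem_sup.1 hx
  obtain ⟨a, rfl⟩ := Submodule.mem_span_singleton.1 hz
  refine hux ?_
  rw [smul_add, smul_comm]
  exact add_mem (Nat.sub_sub j 1 1 ▸ hω.smul_mem_pred (by omega) hy) (Submodule.smul_mem _ a huw)

variable (hgr : ∀ j, 2 ≤ j → j ≤ e → ∃ x ∈ ω j, u • x ∉ ω (j - 2))
include hgr

lemma span_singleton_eq {j : ℕ} (hj : j ≤ e) {w : M} (hw : w ∈ ω j) (hw' : w ∉ ω (j - 1)) :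
    Submodule.span R {w} = ω j := by
  induction j generalizing w with
  | zero => exact absurd hw hw'
  | succ m ih =>
    have hle : ω m ≤ Submodule.span R {w} := by
      rcases Nat.eq_zero_or_pos m with rfl | hm
      · simp [hω.zero_eq_bot]
      · rw [← ih (by omega) (hω.smul_mem_pred hj hw)
          (hω.smul_notMem_of_notMem (by omega) hj (hgr _ (by omega) hj) hw hw')]
        exact Submodule.span_singleton_le_iff_mem _ _ |>.2 (Submodule.smul_mem _ u
          (Submodule.mem_span_singleton_self w))
    rw [← Submodule.sup_span_singleton_eq_of_covBy (hω.covBy (m + 1) (by omega) hj) hw hw']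
    exact (sup_eq_right.2 hle).symm

lemma pow_pred_smul_ne_zero {j : ℕ} (hj : 1 ≤ j) (hje : j ≤ e) {w : M} (hw : w ∈ ω j)
    (hw' : w ∉ ω (j - 1)) : u ^ (j - 1) • w ≠ 0 := by
  induction j generalizing w with
  | zero => omega
  | succ m ih =>
    rcases Nat.eq_zero_or_pos m with rfl | hm
    · simpa [hω.zero_eq_bot] using hw'
    · rw [Nat.add_sub_cancel, ← Nat.sub_add_cancel hm, pow_succ, mul_smul]
      exact ih hm (by omega) (hω.smul_mem_pred hje hw)
        (hω.smul_notMem_of_notMem (by omega) hje (hgr _ (by omega) hje) hw hw')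

lemma exists_span_singleton_eq_and_pow_pred_smul_ne_zero (he : 1 ≤ e) :
    ∃ v ∈ ω e, Submodule.span R {v} = ω e ∧ u ^ (e - 1) • v ≠ 0 := by
  obtain ⟨v, hv, hv'⟩ := SetLike.exists_of_lt (hω.covBy e he le_rfl).lt
  exact ⟨v, hv, hω.span_singleton_eq hgr le_rfl hv hv',
    hω.pow_pred_smul_ne_zero hgr he le_rfl hv hv'⟩

omit hgr in
lemma exists_smul_notMem_of_pow_pred_smul_ne_zero {v : M} (hv : v ∈ ω e)
    (hv0 : u ^ (e - 1) • v ≠ 0) {j : ℕ} (hj : 2 ≤ j) (hje : j ≤ e) :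
    ∃ x ∈ ω j, u • x ∉ ω (j - 2) := by
  refine ⟨u ^ (e - j) • v, ?_, fun h => hv0 ?_⟩
  · simpa [Nat.sub_sub_self hje] using hω.pow_smul_mem (e - j) le_rfl hv
  · rw [← hω.pow_smul_eq_zero (by omega) h, smul_smul, smul_smul, ← pow_succ, ← pow_add]
    congr 2
    omega

end IsPappasRapoportFiltration

end Filtration

theorem stmt9_general {k : Type*} [Field k] (e : ℕ) (he : 1 ≤ e)
    {E : Type*} [AddCommGroup E] [Module (TruncPoly k e) E]
    (ω : ℕ → Submodule (TruncPoly k e) E)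
    (h0 : ω 0 = ⊥)
    (hcov : ∀ j, 1 ≤ j → j ≤ e → ω (j - 1) ⋖ ω j)
    (hu : ∀ j, 1 ≤ j → j ≤ e → ∀ x ∈ ω j, truncU k e • x ∈ ω (j - 1)) :
    (∀ j, 2 ≤ j → j ≤ e → ∃ x ∈ ω j, truncU k e • x ∉ ω (j - 2)) ↔
      ∃ v ∈ ω e, Submodule.span (TruncPoly k e) {v} = ω e ∧
        ∀ a : TruncPoly k e, a • v = 0 → a = 0 := by
  have hω : IsPappasRapoportFiltration (truncU k e) ω e := ⟨h0, hcov, hu⟩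
  simp_rw [forall_smul_eq_zero_imp_iff_truncU_pow_pred_smul_ne_zero he]
  constructor
  · exact fun hgr => hω.exists_span_singleton_eq_and_pow_pred_smul_ne_zero hgr he
  · rintro ⟨v, hv, -, hv0⟩ j hj hje
    exact hω.exists_smul_notMem_of_pow_pred_smul_ne_zero hv hv0 hj hje

/-- For a Pappas–Rapoport filtration `0 = ω⁰ ⊆ ω¹ ⊆ ⋯ ⊆ ω^e` (with one-dimensional
graded pieces and `u·ω^j ⊆ ω^{j-1}`) inside a free rank-2 module over `k[u]/(u^e)`,
the following are equivalent: (1) all the maps induced by `u` on successive graded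
pieces are nonzero; (2) `ω^e` is free of rank one over `k[u]/(u^e)`. -/
theorem stmt9 {k : Type*} [Field k] (e : ℕ) (he : 1 ≤ e)
    {E : Type*} [AddCommGroup E] [Module (TruncPoly k e) E]
    (b : Module.Basis (Fin 2) (TruncPoly k e) E)
    (ω : ℕ → Submodule (TruncPoly k e) E)
    (h0 : ω 0 = ⊥)
    (hcov : ∀ j, 1 ≤ j → j ≤ e → ω (j - 1) ⋖ ω j)
    (hu : ∀ j, 1 ≤ j → j ≤ e → ∀ x ∈ ω j, truncU k e • x ∈ ω (j - 1)) :
    (∀ j, 2 ≤ j → j ≤ e → ∃ x ∈ ω j, truncU k e • x ∉ ω (j - 2)) ↔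
      ∃ v ∈ ω e, Submodule.span (TruncPoly k e) {v} = ω e ∧
        ∀ a : TruncPoly k e, a • v = 0 → a = 0 :=
  stmt9_general e he ω h0 hcov hu
end

section
/- Let k be a field and ℰ a free module of rank 2 over k[u]/(u⁴). Let 0 = ω^{(0)} ⊆ ⋯ ⊆ ω^{(4)} be a chain of submodules with dim_k(ω^{(j)}/ω^{(j−1)}) = 1 and u·ω^{(j)} ⊆ ω^{(j−1)}. Assume u·ω^{(2)} = 0 (so ω^{(2)} = ℰ[u]) and assume the map induced by u from ω^{(4)}/ω^{(3)} to ω^{(3)}/ω^{(2)} is nonzero. Then for any v ∈ ω^{(4)} \ ω^{(3)} one has u²·v ≠ 0; in particular ω^{(4)} ≠ ℰ[u²] and the Hodge invariant of ω^{(4)} is (3, 1). -/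
/-!
Write `R = k[u]/(u⁴)`. Since `R = k + uR`, each step `ω⁽ʲ⁻¹⁾ ⋖ ω⁽ʲ⁾`, being killed by `u`, adds
exactly one dimension over `k`: `dim_k ω⁽ʲ⁾ = j`. As `u : ω⁴/ω³ → ω³/ω²` is nonzero and `ω⁴/ω³`
is a line, `u·v ∈ ω³ \ ω²` for every `v ∈ ω⁴ \ ω³`. If moreover `u²·v = 0`, then
`ω³ = ω² + R·uv ⊆ ℰ[u] = u³ℰ`, which is only 2-dimensional. Completing `u²·v` to a basis
`u²·v, w` of `ω² = ℰ[u]` gives `ω⁴ = R·v + R·w`, and a relation `a·v + c·w = 0` is peeled off one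
power of `u` at a time along `ω³ ⊇ ω² ⊇ R·w`, forcing `a ∈ (u³)` and `c ∈ (u)`.
-/

open Polynomial Submodule Module

section TruncPoly

variable {k : Type*} [Field k] {e : ℕ}

instance TruncPoly.finite : Module.Finite k (TruncPoly k e) :=
  (AdjoinRoot.powerBasis (pow_ne_zero e (X_ne_zero (R := k)))).finite

theorem truncU_pow_self : truncU k e ^ e = 0 := by
  rw [← map_pow, Ideal.Quotient.eq_zero_iff_mem]
  exact Ideal.subset_span rfl

theorem TruncPoly.exists_eq_algebraMap_add_truncU_mul (r : TruncPoly k e) :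
    ∃ (c : k) (s : TruncPoly k e), r = algebraMap k _ c + truncU k e * s := by
  obtain ⟨p, rfl⟩ := Ideal.Quotient.mk_surjective r
  refine ⟨p.coeff 0, Ideal.Quotient.mk _ p.divX, ?_⟩
  conv_lhs => rw [← X_mul_divX_add p]
  rw [map_add, map_mul, add_comm, ← algebraMap_eq, Ideal.Quotient.mk_algebraMap]

theorem TruncPoly.exists_eq_algebraMap_mul_of_truncU_mul_eq_zero {a : TruncPoly k e}
    (ha : truncU k e * a = 0) : ∃ c : k, a = algebraMap k _ c * truncU k e ^ (e - 1) := by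
  obtain ⟨p, rfl⟩ := Ideal.Quotient.mk_surjective a
  rcases e with _ | e
  · exact ⟨0, by simp [Ideal.Quotient.eq_zero_iff_mem]⟩
  · rw [← map_mul, Ideal.Quotient.eq_zero_iff_mem, Ideal.mem_span_singleton, pow_succ',
      mul_dvd_mul_iff_left X_ne_zero] at ha
    obtain ⟨q, rfl⟩ := ha
    obtain ⟨c, s, hq⟩ :=
      exists_eq_algebraMap_add_truncU_mul (Ideal.Quotient.mk _ q : TruncPoly k (e + 1))
    refine ⟨c, ?_⟩
    rw [map_mul, hq, map_pow, Nat.add_sub_cancel, mul_add, ← mul_assoc, ← pow_succ,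
      truncU_pow_self, zero_mul, add_zero, mul_comm]

theorem mem_span_truncU_of_smul_mem {E : Type*} [AddCommGroup E] [Module (TruncPoly k e) E]
    {W : Submodule (TruncPoly k e) E} {x : E} (hx : x ∉ W) (hux : truncU k e • x ∈ W)
    {r : TruncPoly k e} (hr : r • x ∈ W) : r ∈ Ideal.span {truncU k e} := by
  obtain ⟨c, s, rfl⟩ := r.exists_eq_algebraMap_add_truncU_mul
  rw [add_smul, mul_comm, mul_smul, W.add_mem_iff_left (W.smul_mem s hux)] at hr
  obtain rfl | hc := eq_or_ne c 0
  · simpa using Ideal.mul_mem_right s _ (Ideal.mem_span_singleton_self _)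
  · refine absurd ?_ hx
    simpa [← mul_smul, ← map_mul, inv_mul_cancel₀ hc] using W.smul_mem (algebraMap k _ c⁻¹) hr

end TruncPoly

section CovBy

variable {R M : Type*} [CommRing R] [AddCommGroup M] [Module R M] {W W' : Submodule R M}

theorem Submodule.eq_sup_span_singleton_of_covBy (h : W ⋖ W') {x : M} (hx : x ∈ W')
    (hxW : x ∉ W) : W' = W ⊔ R ∙ x := by
  refine ((h.eq_or_eq le_sup_left (sup_le h.le ((span_singleton_le_iff_mem _ _).2 hx))).resolve_left
    fun heq => hxW ?_).symm
  exact heq ▸ mem_sup_right (mem_span_singleton_self x)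

theorem Submodule.smul_notMem_of_covBy (h : W ⋖ W') {r : R} {V : Submodule R M}
    (hWV : ∀ y ∈ W, r • y ∈ V) {x : M} (hx : x ∈ W') (hrx : r • x ∉ V) {v : M} (hv : v ∈ W')
    (hvW : v ∉ W) : r • v ∉ V := by
  intro hrv
  rw [eq_sup_span_singleton_of_covBy h hv hvW, mem_sup] at hx
  obtain ⟨y, hy, _, hz, rfl⟩ := hx
  obtain ⟨s, rfl⟩ := mem_span_singleton.1 hz
  rw [smul_add, smul_comm] at hrx
  exact hrx (V.add_mem (hWV y hy) (V.smul_mem s hrv))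

end CovBy

structure IsPappasRapoportFiltration_s13 {R M : Type*} [CommRing R] [AddCommGroup M] [Module R M]
    (u : R) (n : ℕ) (ω : ℕ → Submodule R M) : Prop where
  zero : ω 0 = ⊥
  covBy : ∀ j, 1 ≤ j → j ≤ n → ω (j - 1) ⋖ ω j
  smul_mem : ∀ j, 1 ≤ j → j ≤ n → ∀ x ∈ ω j, u • x ∈ ω (j - 1)

section Dimension

variable {k : Type*} [Field k] {e : ℕ} {E : Type*} [AddCommGroup E] [Module (TruncPoly k e) E]
  [Module k E] [IsScalarTower k (TruncPoly k e) E]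

theorem Submodule.restrictScalars_sup_span_singleton {W : Submodule (TruncPoly k e) E} {x : E}
    (hux : truncU k e • x ∈ W) :
    (W ⊔ TruncPoly k e ∙ x).restrictScalars k = W.restrictScalars k ⊔ k ∙ x := by
  refine le_antisymm (fun y hy => ?_) (sup_le ((restrictScalars_le k).2 le_sup_left)
    ((span_singleton_le_iff_mem _ _).2 (mem_sup_right (mem_span_singleton_self x))))
  obtain ⟨w, hw, _, hz, rfl⟩ := mem_sup.1 hy
  obtain ⟨r, rfl⟩ := mem_span_singleton.1 hz
  obtain ⟨c, s, rfl⟩ := r.exists_eq_algebraMap_add_truncU_mul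
  rw [add_smul, algebraMap_smul, mul_comm, mul_smul, add_comm (c • x), ← add_assoc]
  exact add_mem (mem_sup_left (W.add_mem hw (W.smul_mem s hux)))
    (mem_sup_right (smul_mem _ c (mem_span_singleton_self x)))

theorem Submodule.restrictScalars_span_singleton_of_truncU_smul_eq_zero {x : E}
    (hux : truncU k e • x = 0) : (TruncPoly k e ∙ x).restrictScalars k = k ∙ x := by
  have := restrictScalars_sup_span_singleton (W := ⊥) (by rw [hux]; exact zero_mem _)
  rwa [bot_sup_eq, restrictScalars_bot, bot_sup_eq] at this

variable [Module.Finite k E]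

theorem Submodule.finrank_eq_succ_of_covBy {W W' : Submodule (TruncPoly k e) E} (h : W ⋖ W')
    (hu : ∀ y ∈ W', truncU k e • y ∈ W) :
    finrank k (W'.restrictScalars k) = finrank k (W.restrictScalars k) + 1 := by
  obtain ⟨x, hx, hxW⟩ := SetLike.exists_of_lt h.lt
  rw [eq_sup_span_singleton_of_covBy h hx hxW, restrictScalars_sup_span_singleton (hu x hx),
    finrank_sup_span_singleton hxW]

theorem IsPappasRapoportFiltration_s13.finrank_eq {n : ℕ} {ω : ℕ → Submodule (TruncPoly k e) E}
    (hω : IsPappasRapoportFiltration_s13 (truncU k e) n ω) {j : ℕ} (hj : j ≤ n) :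
    finrank k ((ω j).restrictScalars k) = j := by
  induction j with
  | zero => simp [hω.zero]
  | succ j ih =>
    have := finrank_eq_succ_of_covBy (hω.covBy (j + 1) (by omega) hj)
      (hω.smul_mem (j + 1) (by omega) hj)
    rwa [Nat.add_sub_cancel, ih (by omega)] at this

theorem finrank_torsionBy_truncU_le {ι : Type*} [Fintype ι] (b : Basis ι (TruncPoly k e) E) :
    finrank k ((torsionBy (TruncPoly k e) E (truncU k e)).restrictScalars k) ≤ Fintype.card ι := by
  refine (finrank_mono fun y hy => ?_).trans
    (finrank_range_le_card fun i => truncU k e ^ (e - 1) • b i)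
  have hrepr i : truncU k e * b.repr y i = 0 := by
    simpa using congr(b.repr $((mem_torsionBy_iff _ _).1 hy) i)
  rw [← b.sum_repr y]
  refine sum_mem fun i _ => ?_
  obtain ⟨c, hc⟩ := (b.repr y i).exists_eq_algebraMap_mul_of_truncU_mul_eq_zero (hrepr i)
  rw [hc, mul_smul, algebraMap_smul]
  exact smul_mem _ c (subset_span ⟨i, rfl⟩)

end Dimension

section Structure

variable {k : Type*} [Field k] {e : ℕ} {E : Type*} [AddCommGroup E] [Module (TruncPoly k e) E]

theorem smul_add_smul_eq_zero_iff_mem_span {W₂ W₃ : Submodule (TruncPoly k e) E} (h₂₃ : W₂ ≤ W₃)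
    (hW₂ : ∀ y ∈ W₂, truncU k e • y = 0) {v w : E} (hv : v ∉ W₃) (huv : truncU k e • v ∈ W₃)
    (huv₂ : truncU k e • v ∉ W₂) (hu2v : truncU k e ^ 2 • v ∈ W₂) (hw : w ∈ W₂)
    (hwv : w ∉ TruncPoly k e ∙ (truncU k e ^ 2 • v)) (hvw : truncU k e ^ 2 • v ∉ TruncPoly k e ∙ w)
    (a c : TruncPoly k e) :
    a • v + c • w = 0 ↔
      a ∈ Ideal.span {truncU k e ^ 3} ∧ c ∈ Ideal.span {truncU k e} := by
  set u := truncU k e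
  have hu3v : u ^ 3 • v = 0 := by rw [pow_succ', mul_smul]; exact hW₂ _ hu2v
  constructor
  · intro h
    have hav : a • v = -(c • w) := eq_neg_of_add_eq_zero_left h
    have hcw : c • w = -(a • v) := eq_neg_of_add_eq_zero_right h
    obtain ⟨a₁, rfl⟩ := Ideal.mem_span_singleton'.1
      (mem_span_truncU_of_smul_mem hv huv (hav ▸ neg_mem (smul_mem _ c (h₂₃ hw))))
    rw [mul_smul] at hav hcw
    obtain ⟨a₂, rfl⟩ := Ideal.mem_span_singleton'.1
      (mem_span_truncU_of_smul_mem huv₂ (by rwa [← mul_smul, ← pow_two])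
        (hav ▸ neg_mem (smul_mem _ c hw)))
    rw [mul_smul, ← mul_smul u, ← pow_two] at hav hcw
    obtain ⟨a₃, rfl⟩ := Ideal.mem_span_singleton'.1
      (mem_span_truncU_of_smul_mem hvw (by rw [← mul_smul, ← pow_succ', hu3v]; exact zero_mem _)
        (hav ▸ neg_mem (mem_span_singleton.2 ⟨c, rfl⟩)))
    refine ⟨Ideal.mem_span_singleton'.2 ⟨a₃, by ring⟩,
      mem_span_truncU_of_smul_mem hwv (by rw [hW₂ w hw]; exact zero_mem _)
        (hcw ▸ neg_mem (mem_span_singleton.2 ⟨a₃ * u, rfl⟩))⟩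
  · rintro ⟨ha, hc⟩
    obtain ⟨a', rfl⟩ := Ideal.mem_span_singleton'.1 ha
    obtain ⟨c', rfl⟩ := Ideal.mem_span_singleton'.1 hc
    rw [mul_smul, hu3v, mul_smul, hW₂ w hw, smul_zero, smul_zero, add_zero]

variable [Module k E] [IsScalarTower k (TruncPoly k e) E] [Module.Finite k E]

theorem truncU_smul_ne_zero_of_covBy {ι : Type*} [Fintype ι] (b : Basis ι (TruncPoly k e) E)
    {W W' : Submodule (TruncPoly k e) E} (h : W ⋖ W') (hW : ∀ y ∈ W, truncU k e • y = 0)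
    (hW' : Fintype.card ι < finrank k (W'.restrictScalars k)) {y : E} (hy : y ∈ W')
    (hyW : y ∉ W) : truncU k e • y ≠ 0 := by
  intro huy
  have hle : W' ≤ torsionBy (TruncPoly k e) E (truncU k e) := by
    rw [eq_sup_span_singleton_of_covBy h hy hyW]
    exact sup_le (fun z hz => (mem_torsionBy_iff _ _).2 (hW z hz))
      ((span_singleton_le_iff_mem _ _).2 huy)
  exact hW'.not_ge <| (finrank_mono ((restrictScalars_le k).2 hle)).trans
    (finrank_torsionBy_truncU_le b)

theorem exists_eq_span_singleton_sup_span_singleton {W : Submodule (TruncPoly k e) E}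
    (hW : ∀ y ∈ W, truncU k e • y = 0) (hdim : finrank k (W.restrictScalars k) = 2) {z : E}
    (hz : z ∈ W) (hz0 : z ≠ 0) :
    ∃ w ∈ W, w ∉ TruncPoly k e ∙ z ∧ z ∉ TruncPoly k e ∙ w ∧
      W = (TruncPoly k e ∙ z) ⊔ (TruncPoly k e ∙ w) := by
  have hkz := restrictScalars_span_singleton_of_truncU_smul_eq_zero (hW z hz)
  have hlt : (TruncPoly k e ∙ z).restrictScalars k < W.restrictScalars k := by
    refine lt_of_le_of_ne ((restrictScalars_le k).2 ((span_singleton_le_iff_mem _ _).2 hz))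
      fun heq => ?_
    have := finrank_span_singleton (K := k) hz0
    rw [← hkz, heq, hdim] at this
    omega
  obtain ⟨w, hw, hwz⟩ := SetLike.exists_of_lt hlt
  have hwz' : w ∉ k ∙ z := hkz ▸ hwz
  have huw : truncU k e • w ∈ TruncPoly k e ∙ z := by rw [hW w hw]; exact zero_mem _
  refine ⟨w, hw, hwz, fun hzw => hwz' ?_, restrictScalars_injective k _ _ ?_⟩
  · have : z ∈ k ∙ w := restrictScalars_span_singleton_of_truncU_smul_eq_zero (hW w hw) ▸ hzw
    simpa using mem_span_insert_exchange (s := ∅) (by simpa using this) (by simpa using hz0)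
  · refine (eq_of_le_of_finrank_eq ((restrictScalars_le k).2 (sup_le ?_ ?_)) ?_).symm
    · exact (span_singleton_le_iff_mem _ _).2 hz
    · exact (span_singleton_le_iff_mem _ _).2 hw
    · rw [restrictScalars_sup_span_singleton huw, hkz, finrank_sup_span_singleton hwz',
        finrank_span_singleton hz0, hdim]

theorem IsPappasRapoportFiltration_s13.exists_eq_span_pair {ω : ℕ → Submodule (TruncPoly k e) E}
    (hω : IsPappasRapoportFiltration_s13 (truncU k e) 4 ω) (hω₂ : ∀ y ∈ ω 2, truncU k e • y = 0)
    {v : E} (hv : v ∈ ω 4) (hv₃ : v ∉ ω 3) (huv : truncU k e • v ∉ ω 2)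
    (hu2v : truncU k e ^ 2 • v ≠ 0) :
    ∃ w ∈ ω 4, ω 4 = span (TruncPoly k e) {v, w} ∧ ∀ a c : TruncPoly k e,
      (a • v + c • w = 0 ↔ a ∈ Ideal.span {truncU k e ^ 3} ∧ c ∈ Ideal.span {truncU k e}) := by
  have h₃₄ := hω.covBy 4 (by norm_num) le_rfl
  have h₂₃ := hω.covBy 3 (by norm_num) (by norm_num)
  have huv₃ : truncU k e • v ∈ ω 3 := hω.smul_mem 4 (by norm_num) le_rfl v hv
  have hu2v₂ : truncU k e ^ 2 • v ∈ ω 2 := by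
    rw [pow_two, mul_smul]
    exact hω.smul_mem 3 (by norm_num) (by norm_num) _ huv₃
  obtain ⟨w, hw, hwz, hzw, hω₂_eq⟩ := exists_eq_span_singleton_sup_span_singleton hω₂
    (hω.finrank_eq (by norm_num)) hu2v₂ hu2v
  refine ⟨w, h₃₄.le (h₂₃.le hw), ?_,
    smul_add_smul_eq_zero_iff_mem_span h₂₃.le hω₂ hv₃ huv₃ huv hu2v₂ hw hwz hzw⟩
  rw [span_insert, eq_sup_span_singleton_of_covBy h₃₄ hv hv₃,
    eq_sup_span_singleton_of_covBy h₂₃ huv₃ huv, hω₂_eq]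
  apply le_antisymm
  · simp only [sup_le_iff]
    exact ⟨⟨⟨(span_singleton_smul_le _ _ _).trans le_sup_left, le_sup_right⟩,
      (span_singleton_smul_le _ _ _).trans le_sup_left⟩, le_sup_left⟩
  · exact sup_le le_sup_right (le_sup_right.trans (le_sup_left.trans le_sup_left))

end Structure

/-- For a Pappas–Rapoport filtration in a free rank-2 module over `k[u]/(u⁴)`, if
`u·ω² = 0` (so `ω² = ℰ[u]`) and the map `u : ω⁴/ω³ → ω³/ω²` is nonzero, then
`u²·v ≠ 0` for every `v ∈ ω⁴ \ ω³`; in particular `ω⁴ ≠ ℰ[u²]` and the Hodge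
invariant of `ω⁴` is `(3, 1)`, i.e. `ω⁴ ≅ k[u]/(u³) ⊕ k[u]/(u)`. -/
theorem stmt13 {k : Type*} [Field k]
    {E : Type*} [AddCommGroup E] [Module (TruncPoly k 4) E]
    (b : Module.Basis (Fin 2) (TruncPoly k 4) E)
    (ω : ℕ → Submodule (TruncPoly k 4) E)
    (h0 : ω 0 = ⊥)
    (hcov : ∀ j, 1 ≤ j → j ≤ 4 → ω (j - 1) ⋖ ω j)
    (hu : ∀ j, 1 ≤ j → j ≤ 4 → ∀ x ∈ ω j, truncU k 4 • x ∈ ω (j - 1))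
    (hm2 : ∀ x ∈ ω 2, truncU k 4 • x = 0)
    (hm4 : ∃ x ∈ ω 4, truncU k 4 • x ∉ ω 2) :
    (∀ v ∈ ω 4, v ∉ ω 3 → (truncU k 4 ^ 2) • v ≠ 0) ∧
    ω 4 ≠ Submodule.torsionBy (TruncPoly k 4) E (truncU k 4 ^ 2) ∧
    ∃ v w : E, v ∈ ω 4 ∧ w ∈ ω 4 ∧
      ω 4 = Submodule.span (TruncPoly k 4) {v, w} ∧
      ∀ a c : TruncPoly k 4,
        (a • v + c • w = 0 ↔
          a ∈ Ideal.span {truncU k 4 ^ 3} ∧ c ∈ Ideal.span {truncU k 4}) := by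
  let _ : Module k E := Module.compHom E (algebraMap k (TruncPoly k 4))
  have : IsScalarTower k (TruncPoly k 4) E :=
    ⟨fun c r x => by rw [Algebra.smul_def c r, mul_smul]; rfl⟩
  have : Module.Finite (TruncPoly k 4) E := .of_basis b
  have : Module.Finite k E := .trans (TruncPoly k 4) E
  have hω : IsPappasRapoportFiltration_s13 (truncU k 4) 4 ω := ⟨h0, hcov, hu⟩
  obtain ⟨x, hx, hux⟩ := hm4
  have huv : ∀ v ∈ ω 4, v ∉ ω 3 → truncU k 4 • v ∉ ω 2 := fun v hv hv₃ =>
    smul_notMem_of_covBy (hcov 4 (by norm_num) le_rfl) (hu 3 (by norm_num) (by norm_num))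
      hx hux hv hv₃
  have hu2v : ∀ v ∈ ω 4, v ∉ ω 3 → truncU k 4 ^ 2 • v ≠ 0 := fun v hv hv₃ => by
    rw [pow_two, mul_smul]
    exact truncU_smul_ne_zero_of_covBy b (hcov 3 (by norm_num) (by norm_num)) hm2
      (by rw [hω.finrank_eq (by norm_num)]; simp) (hu 4 (by norm_num) le_rfl v hv) (huv v hv hv₃)
  obtain ⟨v, hv, hv₃⟩ := SetLike.exists_of_lt (hcov 4 (by norm_num) le_rfl).lt
  obtain ⟨w, hw, hspan, hrel⟩ := hω.exists_eq_span_pair hm2 hv hv₃ (huv v hv hv₃) (hu2v v hv hv₃)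
  exact ⟨hu2v, fun h => hu2v v hv hv₃ ((mem_torsionBy_iff _ _).1 (h ▸ hv)),
    v, w, hv, hw, hspan, hrel⟩
end
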